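/- Let m ≥ n ≥ r ≥ 1 and let f(x,y) = Σ_{i=1}^r p_i(x)·q_i(y) over a field F with deg p_i < n and deg q_i < m for all i. Let K be an extension of F containing g of multiplicative order ≥ m. Then f is nonzero (over F) if and only if one of the univariate polynomials f(x, g^ℓ x) for ℓ = 0,...,r−1 is nonzero (over K). -/

import Mathlib

open Polynomial

open Polynomial in
lemma coeff_comp_C_mul_X {K : Type*} [CommRing K] (p : K[X]) (a : K) (k : ℕ) :
    (p.comp (C a * X)).coeff k = p.coeff k * a ^ k := by
  induction p using Polynomial.induction_on' with
  | add p q hp hq => simp [add_comp, hp, hq, add_mul]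
  | monomial i b =>
    rw [← Polynomial.C_mul_X_pow_eq_monomial, mul_comp, C_comp, X_pow_comp, mul_pow, ← mul_assoc, ← C_pow]
    rw [← C_mul, coeff_C_mul_X_pow, coeff_C_mul_X_pow]
    split
    · next h => subst h; ring
    · simp

open Polynomial in
lemma coeff_prod_sum {K : Type*} [CommRing K] {ι : Type*} (s : Finset ι) (f : ι → K[X])
    (e : ι → ℕ) (h : ∀ i ∈ s, (f i).natDegree ≤ e i) :
    (∏ i ∈ s, f i).coeff (∑ i ∈ s, e i) = ∏ i ∈ s, (f i).coeff (e i) := by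
  classical
  induction s using Finset.induction_on with
  | empty => simp
  | insert _ _ hx ih =>
    rename_i x s
    rw [Finset.prod_insert hx, Finset.sum_insert hx, Finset.prod_insert hx,
      Polynomial.coeff_mul_add_eq_of_natDegree_le (h x (s.mem_insert_self x))
        (le_trans (Polynomial.natDegree_prod_le s f) (Finset.sum_le_sum fun i hi => h i (Finset.mem_insert_of_mem hi))),
      ih fun i hi => h i (Finset.mem_insert_of_mem hi)]

lemma lemA {K : Type*} [Field K] (m : ℕ) (g : K)
    (hg : Function.Injective fun i : Fin m => g ^ (i : ℕ)) (d : ℕ)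
    (P Q : Fin d → K[X]) (hQ0 : ∀ s, Q s ≠ 0) (hQm : ∀ s, (Q s).natDegree < m)
    (hinj : Function.Injective fun s => (Q s).natDegree)
    (h : ∀ ℓ < d, ∑ s, P s * (Q s).comp (C (g ^ ℓ) * X) = 0) : ∀ s, P s = 0 := by
  classical
  set e : Fin d → ℕ := fun s => (Q s).natDegree with he
  set M : Matrix (Fin d) (Fin d) K[X] :=
    Matrix.of fun ℓ s : Fin d => (Q s).comp (C (g ^ (ℓ : ℕ)) * X) with hM
  have hMdeg : ∀ ℓ s, (M ℓ s).natDegree ≤ e s := by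
    intro ℓ s
    refine le_trans (natDegree_comp_le) ?_
    have h1 : (C (g ^ (ℓ:ℕ)) * X).natDegree ≤ 1 := by
      refine le_trans (natDegree_mul_le) ?_
      simp
    calc (Q s).natDegree * (C (g ^ (ℓ:ℕ)) * X).natDegree ≤ (Q s).natDegree * 1 :=
          Nat.mul_le_mul_left _ h1
      _ = e s := by simp [he]
  have hcoeff : ∀ ℓ s, (M ℓ s).coeff (e s) = (Q s).leadingCoeff * (g ^ (e s)) ^ (ℓ : ℕ) := by
    intro ℓ s
    rw [hM]
    simp only [Matrix.of_apply]
    rw [coeff_comp_C_mul_X, ← pow_mul, ← pow_mul, mul_comm (ℓ:ℕ)]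
    rfl
  -- det coeff computation
  have hdetcoeff : (M.det).coeff (∑ s, e s) =
      (∏ s, (Q s).leadingCoeff) * ((Matrix.vandermonde fun s => g ^ (e s)).transpose).det := by
    rw [Matrix.det_apply, finset_sum_coeff]
    rw [Matrix.det_apply]
    rw [Finset.mul_sum]
    refine Finset.sum_congr rfl fun σ _ => ?_
    rw [Polynomial.coeff_smul,
      coeff_prod_sum Finset.univ (fun s => M (σ s) s) e (fun s _ => hMdeg (σ s) s)]
    have : ∏ s, (M (σ s) s).coeff (e s) =
        (∏ s, (Q s).leadingCoeff) * ∏ s, (g ^ (e s)) ^ ((σ s : Fin d) : ℕ) := by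
      rw [← Finset.prod_mul_distrib]
      exact Finset.prod_congr rfl fun s _ => hcoeff (σ s) s
    rw [this]
    have hv : ∏ s, ((Matrix.vandermonde fun s => g ^ (e s)).transpose) (σ s) s
        = ∏ s, (g ^ (e s)) ^ ((σ s : Fin d) : ℕ) := by
      refine Finset.prod_congr rfl fun s _ => ?_
      simp [Matrix.vandermonde, Matrix.transpose_apply]
    rw [hv, mul_smul_comm]
  have hveq : ((Matrix.vandermonde fun s => g ^ (e s)).transpose).det ≠ 0 := by
    rw [Matrix.det_transpose, Matrix.det_vandermonde]
    refine Finset.prod_ne_zero_iff.2 fun i _ => Finset.prod_ne_zero_iff.2 fun j hj => ?_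
    rw [Finset.mem_Ioi] at hj
    refine sub_ne_zero.2 fun hgg => ?_
    have : (⟨e j, hQm j⟩ : Fin m) = ⟨e i, hQm i⟩ := hg hgg
    exact absurd (hinj (by simpa using congrArg Fin.val this)) (Fin.ne_of_gt hj)
  have hdet : M.det ≠ 0 := fun h0 => by
    rw [h0] at hdetcoeff
    simp only [coeff_zero] at hdetcoeff
    exact hveq (by
      rcases mul_eq_zero.1 hdetcoeff.symm with h1 | h1
      · exact absurd h1 (Finset.prod_ne_zero_iff.2 fun s _ => leadingCoeff_ne_zero.2 (hQ0 s))
      · exact h1)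
  have hMP : M.mulVec P = 0 := by
    funext ℓ
    have := h ℓ ℓ.2
    simpa [Matrix.mulVec, dotProduct, hM, mul_comm] using this
  have hP : M.det • P = 0 := by
    have := congrArg (fun v => M.adjugate.mulVec v) hMP
    simpa [Matrix.mulVec_mulVec, Matrix.adjugate_mul, Matrix.smul_mulVec,
      Matrix.one_mulVec] using this
  intro s
  have := congrFun hP s
  simp only [Pi.smul_apply, smul_eq_mul, Pi.zero_apply, mul_eq_zero] at this
  rcases this with h1 | h1
  · exact absurd h1 hdet
  · exact h1


-- swap lemma
lemma swap_sum {K : Type*} [Field K] {A : Type*} [CommRing A] {ι : Type*} [DecidableEq ι]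
    (φ ψ : K[X] →+* A) (hC : ∀ c : K, φ (C c) = ψ (C c))
    (S : Finset ι) {s t : ι} (hs : s ∈ S) (ht : t ∈ S) (hst : s ≠ t) (c : K)
    (P Q : ι → K[X]) :
    ∑ u ∈ S, ψ (Function.update P t (P t + C c * P s) u)
        * φ (Function.update Q s (Q s - C c * Q t) u)
      = ∑ u ∈ S, ψ (P u) * φ (Q u) := by
  rw [← sub_eq_zero, ← Finset.sum_sub_distrib]
  have hsub : ({s, t} : Finset ι) ⊆ S := by
    intro u hu
    rcases Finset.mem_insert.1 hu with h | h
    · exact h ▸ hs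
    · exact (Finset.mem_singleton.1 h) ▸ ht
  rw [← Finset.sum_subset hsub (fun u hu hnot => by
    have hus : u ≠ s := fun h => hnot (by simp [h])
    have hut : u ≠ t := fun h => hnot (by simp [h])
    rw [Function.update_of_ne hut, Function.update_of_ne hus, sub_self])]
  rw [Finset.sum_pair hst]
  rw [Function.update_of_ne hst, Function.update_self, Function.update_self,
    Function.update_of_ne (Ne.symm hst)]
  simp only [map_add, map_sub, map_mul]
  rw [hC]
  ring

open scoped Classical in
lemma lemB {K : Type*} [Field K] (m : ℕ) (g : K)
    (hg : Function.Injective fun i : Fin m => g ^ (i : ℕ)) :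
    ∀ (k : ℕ) {ι : Type*} [DecidableEq ι] (S : Finset ι) (P Q : ι → K[X]),
    (S.card + ∑ s ∈ S, (if Q s = 0 then 0 else (Q s).natDegree + 1)) ≤ k →
    (∀ s ∈ S, (Q s).natDegree < m) →
    (∀ ℓ < S.card, ∑ s ∈ S, P s * (Q s).comp (C (g ^ ℓ) * X) = 0) →
    ∑ s ∈ S, C (P s) * (Q s).map C = 0 := by
  intro k
  induction k using Nat.strong_induction_on with
  | _ k ih =>
  intro ι _ S P Q hk hdeg h
  by_cases hcase1 : ∃ s ∈ S, Q s = 0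
  · obtain ⟨s, hs, hQs⟩ := hcase1
    have hterm : C (P s) * (Q s).map C = 0 := by rw [hQs]; simp
    rw [← Finset.sum_erase S hterm]
    have hk1 : 1 ≤ k := le_trans (by
      have := Finset.card_pos.2 ⟨s, hs⟩
      omega) hk
    refine ih (k - 1) (by omega) (S.erase s) P Q ?_ ?_ ?_
    · have hcard : (S.erase s).card = S.card - 1 := Finset.card_erase_of_mem hs
      have hsum : ∑ u ∈ S.erase s, (if Q u = 0 then 0 else (Q u).natDegree + 1)
          = ∑ u ∈ S, (if Q u = 0 then 0 else (Q u).natDegree + 1) :=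
        Finset.sum_erase S (by rw [hQs]; simp)
      have hc1 : 1 ≤ S.card := Finset.card_pos.2 ⟨s, hs⟩
      omega
    · exact fun u hu => hdeg u (Finset.mem_of_mem_erase hu)
    · intro ℓ hℓ
      have hℓ' : ℓ < S.card := lt_of_lt_of_le hℓ (Finset.card_le_card (Finset.erase_subset s S))
      rw [Finset.sum_erase S (by rw [hQs]; simp)]
      exact h ℓ hℓ'
  · push_neg at hcase1
    by_cases hcase2 : ∃ s ∈ S, ∃ t ∈ S, s ≠ t ∧ (Q s).natDegree = (Q t).natDegree
    · obtain ⟨s, hs, t, ht, hst, hdeq⟩ := hcase2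
      set c : K := (Q s).leadingCoeff / (Q t).leadingCoeff with hc
      set P' := Function.update P t (P t + C c * P s) with hP'
      set Q' := Function.update Q s (Q s - C c * Q t) with hQ'
      have hQt0 : (Q t).leadingCoeff ≠ 0 := leadingCoeff_ne_zero.2 (hcase1 t ht)
      have hQsub_le : (Q s - C c * Q t).natDegree ≤ (Q s).natDegree := by
        refine le_trans (natDegree_sub_le _ _) ?_
        simp only [max_le_iff]
        exact ⟨le_refl _, le_trans (natDegree_C_mul_le _ _) (le_of_eq hdeq.symm)⟩
      have hQsub_lt : (if Q' s = 0 then 0 else (Q' s).natDegree + 1) ≤ (Q s).natDegree := by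
        rw [hQ', Function.update_self]
        split
        · exact Nat.zero_le _
        · next h0 =>
          have hcc : (Q s - C c * Q t).coeff ((Q s).natDegree) = 0 := by
            rw [coeff_sub, coeff_C_mul, coeff_natDegree, hdeq, coeff_natDegree, hc,
              div_mul_cancel₀ _ hQt0, sub_self]
          have hne : (Q s - C c * Q t).natDegree ≠ (Q s).natDegree := by
            intro heq
            apply h0
            rw [← leadingCoeff_eq_zero, ← coeff_natDegree, heq]
            exact hcc
          omega
      have hsum_lt : ∑ u ∈ S, (if Q' u = 0 then 0 else (Q' u).natDegree + 1)
          < ∑ u ∈ S, (if Q u = 0 then 0 else (Q u).natDegree + 1) := by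
        refine Finset.sum_lt_sum (fun u hu => ?_) ⟨s, hs, ?_⟩
        · by_cases hus : u = s
          · subst hus
            refine le_trans hQsub_lt ?_
            rw [if_neg (hcase1 u hu)]; omega
          · rw [hQ', Function.update_of_ne hus]
        · refine lt_of_le_of_lt hQsub_lt ?_
          rw [if_neg (hcase1 s hs)]; omega
      have hmain := ih (k - 1) (by omega) S P' Q' (by omega) ?_ ?_
      · -- conclusion transfer
        have := swap_sum (mapRingHom (C : K →+* K[X]))
          (C : K[X] →+* (K[X])[X]) (fun c => by simp) S hs ht hst c P Q
        simp only [coe_mapRingHom] at this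
        rw [← hP', ← hQ'] at this
        rw [← this]
        exact hmain
      · intro u hu
        by_cases hus : u = s
        · subst hus
          rw [hQ', Function.update_self]
          exact lt_of_le_of_lt hQsub_le (hdeg u hu)
        · rw [hQ', Function.update_of_ne hus]
          exact hdeg u hu
      · intro ℓ hℓ
        have := swap_sum (eval₂RingHom (C : K →+* K[X]) (C (g ^ ℓ) * X))
          (RingHom.id K[X]) (fun c => by simp) S hs ht hst c P Q
        simp only [coe_eval₂RingHom, RingHom.id_apply] at this
        rw [← hP', ← hQ'] at this
        calc ∑ u ∈ S, P' u * (Q' u).comp (C (g ^ ℓ) * X)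
            = ∑ u ∈ S, P u * (Q u).comp (C (g ^ ℓ) * X) := this
          _ = 0 := h ℓ hℓ
    · push_neg at hcase2
      set σ := S.equivFin with hσ
      have key := lemA m g hg S.card (fun i => P ((σ.symm i) : ι)) (fun i => Q ((σ.symm i) : ι))
        (fun i => hcase1 _ (σ.symm i).2)
        (fun i => hdeg _ (σ.symm i).2)
        (fun i j hij => by
          have := hcase2 _ (σ.symm i).2 _ (σ.symm j).2
          by_contra hne
          exact this (fun hcoe => hne (by
            have : σ.symm i = σ.symm j := Subtype.coe_injective hcoe
            simpa using congrArg σ this)) hij)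
        (fun ℓ hℓ => by
          rw [← h ℓ hℓ, ← Finset.sum_coe_sort S (fun u => P u * (Q u).comp (C (g ^ ℓ) * X))]
          exact Fintype.sum_equiv σ.symm
            (fun i => P ((σ.symm i : ι)) * (Q ((σ.symm i : ι))).comp (C (g ^ ℓ) * X))
            (fun x => P (x : ι) * (Q (x : ι)).comp (C (g ^ ℓ) * X)) (fun i => rfl))
      refine Finset.sum_eq_zero fun u hu => ?_
      have : P u = 0 := by
        have := key (σ ⟨u, hu⟩)
        simpa using this
      rw [this]; simp


/-- A bivariate polynomial `f(x,y) = Σ pᵢ(x) qᵢ(y)` of degrees `< n, < m` is nonzero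
iff one of the substitutions `y ↦ gˡ x` for `ℓ < r` is nonzero. -/
theorem bivariate_nonzero_iff_univariate {F K : Type*} [Field F] [Field K] [Algebra F K]
    (n m r : ℕ) (hr : 1 ≤ r) (hrn : r ≤ n) (hnm : n ≤ m)
    (p q : Fin r → Polynomial F)
    (hp : ∀ i, (p i).natDegree < n) (hq : ∀ i, (q i).natDegree < m)
    (g : K) (hg : Function.Injective fun i : Fin m => g ^ (i : ℕ)) :
    (∑ i, Polynomial.C (p i) * (q i).map Polynomial.C) ≠ 0 ↔
      ∃ ℓ < r,
        Polynomial.eval (Polynomial.C (g ^ ℓ) * Polynomial.X)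
          ((∑ i, Polynomial.C (p i) * (q i).map Polynomial.C).map
            (Polynomial.mapRingHom (algebraMap F K))) ≠ 0 := by
  classical
  set φ := algebraMap F K with hφ
  set f : Polynomial (Polynomial F) := ∑ i, Polynomial.C (p i) * (q i).map Polynomial.C with hf
  have hcompC : (mapRingHom φ).comp (C : F →+* F[X]) = (C : K →+* K[X]).comp φ :=
    RingHom.ext fun a => by simp
  have hmap : f.map (mapRingHom φ) = ∑ i, C ((p i).map φ) * ((q i).map φ).map C := by
    rw [hf, ← coe_mapRingHom, map_sum]
    refine Finset.sum_congr rfl fun i _ => ?_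
    rw [coe_mapRingHom, Polynomial.map_mul, map_C, coe_mapRingHom, Polynomial.map_map,
      hcompC, ← Polynomial.map_map]
  constructor
  · intro hfne
    by_contra hcon
    push_neg at hcon
    apply hfne
    have hz : f.map (mapRingHom φ) = 0 := by
      rw [hmap]
      refine lemB m g hg
        (Finset.univ.card + ∑ s : Fin r, (if (q s).map φ = 0 then 0 else ((q s).map φ).natDegree + 1))
        Finset.univ (fun i => (p i).map φ) (fun i => (q i).map φ) le_rfl
        (fun i _ => lt_of_le_of_lt (natDegree_map_le) (hq i)) ?_
      intro ℓ hℓ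
      have hℓr : ℓ < r := by simpa using hℓ
      have := hcon ℓ hℓr
      rw [hmap, eval_finset_sum] at this
      simp only [eval_mul, eval_C, eval_map] at this
      simpa only [Polynomial.comp] using this
    have hinj : Function.Injective (Polynomial.map (mapRingHom φ) :
        Polynomial (Polynomial F) → Polynomial (Polynomial K)) := by
      refine Polynomial.map_injective _ ?_
      simpa only [coe_mapRingHom] using Polynomial.map_injective φ φ.injective
    apply hinj
    rw [hz, Polynomial.map_zero]
  · rintro ⟨ℓ, hℓ, hne⟩ hf0
    exact hne (by rw [hf0]; simp)
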